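/- Von Neumann stability of the semi-implicit scheme: Let c > 0, τ > 0, h > 0, λ > 0 and κ ≥ 0. Define the amplification factor G(ω₁, ω₂) = [1 − (4cτ/h²)(sin²(ω₁h/2) + sin²(ω₂h/2))] / (1 + τλκ) where κ = |K̂(ω₁,ω₂)|². Then |G(ω₁,ω₂)| ≤ 1 for all ω₁, ω₂ ∈ ℝ, all λ > 0 and all κ ≥ 0 if and only if τc/h² ≤ 1/4. -/
import Mathlib


/-- Von Neumann stability of the semi-implicit scheme: with amplification factor
`G(ω₁,ω₂) = [1 - (4cτ/h²)(sin²(ω₁h/2)+sin²(ω₂h/2))]/(1 + τλκ)`, one has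
`|G| ≤ 1` for all frequencies, all `λ > 0` and all `κ ≥ 0` iff `τc/h² ≤ 1/4`. -/
theorem stmt_15 (c τ h : ℝ) (hc : 0 < c) (hτ : 0 < τ) (hh : 0 < h) :
    (∀ lam : ℝ, 0 < lam → ∀ κ : ℝ, 0 ≤ κ → ∀ ω₁ ω₂ : ℝ,
      |(1 - (4 * c * τ / h ^ 2) *
          ((Real.sin (ω₁ * h / 2)) ^ 2 + (Real.sin (ω₂ * h / 2)) ^ 2)) /
        (1 + τ * lam * κ)| ≤ 1)
    ↔ τ * c / h ^ 2 ≤ 1 / 4 := by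
  have hh2 : (0:ℝ) < h ^ 2 := by positivity
  constructor
  · intro H
    have := H 1 one_pos 0 le_rfl (Real.pi / h) (Real.pi / h)
    have hω : Real.pi / h * h / 2 = Real.pi / 2 := by field_simp
    rw [hω, Real.sin_pi_div_two] at this
    simp only [mul_zero, add_zero, div_one, one_pow] at this
    rw [abs_le] at this
    have h1 := this.1
    have key : 4 * c * τ / h ^ 2 ≤ 1 := by linarith
    rw [div_le_one hh2] at key
    rw [div_le_div_iff₀ hh2 (by norm_num : (0:ℝ) < 4)]
    nlinarith
  · intro H lam hlam κ hκ ω₁ ω₂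
    rw [div_le_iff₀ hh2] at H
    have ha2 : 4 * c * τ / h ^ 2 ≤ 1 := by
      rw [div_le_one hh2]; nlinarith
    have ha0 : (0:ℝ) ≤ 4 * c * τ / h ^ 2 := by positivity
    have hs1 : Real.sin (ω₁ * h / 2) ^ 2 ≤ 1 := Real.sin_sq_le_one _
    have hs2 : Real.sin (ω₂ * h / 2) ^ 2 ≤ 1 := Real.sin_sq_le_one _
    have hs01 : 0 ≤ Real.sin (ω₁ * h / 2) ^ 2 := sq_nonneg _
    have hs02 : 0 ≤ Real.sin (ω₂ * h / 2) ^ 2 := sq_nonneg _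
    have hD : (1:ℝ) ≤ 1 + τ * lam * κ := by nlinarith [mul_nonneg (mul_nonneg hτ.le hlam.le) hκ]
    have hD0 : (0:ℝ) < 1 + τ * lam * κ := by linarith
    rw [abs_div, div_le_one (by rwa [abs_of_pos hD0])]
    have hN : |1 - 4 * c * τ / h ^ 2 *
        (Real.sin (ω₁ * h / 2) ^ 2 + Real.sin (ω₂ * h / 2) ^ 2)| ≤ 1 := by
      rw [abs_le]; constructor <;> nlinarith
    calc |1 - 4 * c * τ / h ^ 2 *
        (Real.sin (ω₁ * h / 2) ^ 2 + Real.sin (ω₂ * h / 2) ^ 2)| ≤ 1 := hN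
      _ ≤ |1 + τ * lam * κ| := by rwa [abs_of_pos hD0]
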